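/- The solution function built from the ultradiscrete theta function is periodic with period 9κ: fix κ > 0, define Ξ(u; α, β, γ, θ) := [Θ(u/α; θ) − Θ((u−β)/α; θ)] − [Θ((u−γ)/α; θ) − Θ((u−β−γ)/α; θ)] and Ω(u) := max( Ξ(u; 9κ, 6κ, 2κ, 9κ/2), Ξ(u−κ; 9κ, 3κ, 3κ, 9κ/2) ). Then for every u ∈ ℝ, Ω(u + 9κ) = Ω(u). -/

import Mathlib

/-- The ultradiscrete elliptic theta function
`Θ(u; θ) = −θ(u − 1/2)² + θ · sup_{n ∈ ℤ} (2nu − n − n²)`. -/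
noncomputable def uTheta (u θ : ℝ) : ℝ :=
  -θ * (u - 1 / 2) ^ 2 + θ * ⨆ n : ℤ, (2 * (n : ℝ) * u - (n : ℝ) - (n : ℝ) ^ 2)

/-- `Ξ(u; α, β, γ, θ) = [Θ(u/α) − Θ((u−β)/α)] − [Θ((u−γ)/α) − Θ((u−β−γ)/α)]`. -/
noncomputable def Xi (u α β γ θ : ℝ) : ℝ :=
  (uTheta (u / α) θ - uTheta ((u - β) / α) θ) -
    (uTheta ((u - γ) / α) θ - uTheta ((u - β - γ) / α) θ)

/-- The solution function
`Ω(u) = max( Ξ(u; 9κ, 6κ, 2κ, 9κ/2), Ξ(u−κ; 9κ, 3κ, 3κ, 9κ/2) )`. -/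
noncomputable def OmegaTheta (κ u : ℝ) : ℝ :=
  max (Xi u (9 * κ) (6 * κ) (2 * κ) (9 * κ / 2))
    (Xi (u - κ) (9 * κ) (3 * κ) (3 * κ) (9 * κ / 2))

/- Θ(·; θ) has period 1: shifting u by 1 turns the exponent of index n into the exponent of
index n - 1 plus 2u, and this 2u cancels against the change of the quadratic prefactor.
Hence each Ξ(·; α, β, γ, θ) has period α, and both branches of Ω have α = 9κ. -/

lemma two_mul_mul_sub_sub_sq_le (n u : ℝ) : 2 * n * u - n - n ^ 2 ≤ (u - 1 / 2) ^ 2 := by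
  nlinarith [sq_nonneg (u - 1 / 2 - n)]

lemma iSup_int_add_one (u : ℝ) :
    ⨆ n : ℤ, (2 * (n : ℝ) * (u + 1) - n - (n : ℝ) ^ 2) =
      (⨆ n : ℤ, (2 * (n : ℝ) * u - n - (n : ℝ) ^ 2)) + 2 * u := by
  set g : ℤ → ℝ := fun n ↦ 2 * (n : ℝ) * u - n - (n : ℝ) ^ 2
  have hg : BddAbove (Set.range fun n ↦ g (Equiv.subRight 1 n)) :=
    ⟨_, Set.forall_mem_range.2 fun n ↦ two_mul_mul_sub_sub_sq_le _ u⟩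
  calc ⨆ n : ℤ, (2 * (n : ℝ) * (u + 1) - n - (n : ℝ) ^ 2)
      = ⨆ n : ℤ, (g (Equiv.subRight 1 n) + 2 * u) := by
        congr 1; funext n; simp only [g, Equiv.subRight_apply]; push_cast; ring
    _ = (⨆ n : ℤ, g (Equiv.subRight 1 n)) + 2 * u := (ciSup_add hg _).symm
    _ = (⨆ n : ℤ, g n) + 2 * u := by rw [Equiv.iSup_comp]

theorem uTheta_add_one (u θ : ℝ) : uTheta (u + 1) θ = uTheta u θ := by
  rw [uTheta, uTheta, iSup_int_add_one]
  ring

theorem Xi_add_self (u α β γ θ : ℝ) : Xi (u + α) α β γ θ = Xi u α β γ θ := by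
  rcases eq_or_ne α 0 with rfl | hα
  · rw [add_zero]
  have shift : ∀ v : ℝ, (v + α) / α = v / α + 1 := fun v ↦ by field_simp
  simp only [Xi, add_sub_right_comm _ α, shift, uTheta_add_one]

theorem OmegaTheta_periodic_general (κ : ℝ) (u : ℝ) :
    OmegaTheta κ (u + 9 * κ) = OmegaTheta κ u := by
  rw [OmegaTheta, OmegaTheta, add_sub_right_comm, Xi_add_self, Xi_add_self]

/-- The solution function built from the ultradiscrete theta function is
periodic with period `9κ`. -/
theorem OmegaTheta_periodic (κ : ℝ) (hκ : 0 < κ) (u : ℝ) :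
    OmegaTheta κ (u + 9 * κ) = OmegaTheta κ u :=
  OmegaTheta_periodic_general κ u
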